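/- (Example 4.8, explicit finite-dimensional feature maps for first moments.) Let Y = Z be a nonempty subset of ℝ^d with ‖z − z′‖_2 ≤ D for all z, z′ ∈ Z. Let g_1, …, g_r : X × ℝ^d → ℝ^d be arbitrary functions with sup_{x∈X, p∈Z} ‖g_j(x,p)‖_2 ≤ B for every j, and define Φ(x,p) : ℝ^d → ℝ^r by (Φ(x,p)(u))_j := ⟨g_j(x,p), u⟩, so that ‖Φ(x,p)‖_op² ≤ r·B². Let y_1,…,y_T ∈ Z be realized outcomes with targets z_t := y_t, and suppose the EVI condition holds with tolerances ε_t ≤ D²·r·B²/2. Then for every j ∈ {1,…,r}, | Σ_{t=1}^T E_{p∼D_t}[ ⟨g_j(x_t,p), y_t − p⟩ ] | ≤ sqrt( 2·r·B²·D²·T ). -/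

import Mathlib

open scoped BigOperators RealInnerProductSpace

/-- A finitely supported probability distribution, given by finitely many
weighted atoms. -/
structure FinDist (α : Type*) where
  n : ℕ
  w : Fin n → ℝ
  pt : Fin n → α
  w_nonneg : ∀ i, 0 ≤ w i
  w_sum : ∑ i, w i = 1

namespace FinDist

noncomputable def exp {α V : Type*} [AddCommMonoid V] [Module ℝ V]
    (D : FinDist α) (f : α → V) : V :=
  ∑ i, D.w i • f (D.pt i)

def support {α : Type*} (D : FinDist α) : Set α :=
  {a | ∃ i, D.w i ≠ 0 ∧ D.pt i = a}

end FinDist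

/-! With `w t := E_{p∼D t}[Φ(x t, p)(y t - p)] ∈ ℝ^r` and `M t := ∑_{τ<t} w τ`, the EVI condition
at `z = y t` says `⟪M t, w t⟫ ≤ ε t`. Hence `‖M (t+1)‖² = ‖M t‖² + 2⟪M t, w t⟫ + ‖w t‖²` grows by at
most `2 ε t + r B² D² ≤ 2 r B² D²` per step, so `‖M T‖² ≤ 2 r B² D² T`; the `j`-th coordinate of
`M T` is the sum in question, and it is bounded by `‖M T‖`. -/

open Finset

namespace FinDist

variable {α V W : Type*} [AddCommMonoid V] [Module ℝ V] [AddCommMonoid W] [Module ℝ W]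

theorem map_exp {F : Type*} [FunLike F V W] [LinearMapClass F ℝ V W] (L : F)
    (D : FinDist α) (f : α → V) : L (D.exp f) = D.exp (fun a => L (f a)) := by
  simp only [exp, map_sum, map_smul]

theorem norm_exp_le {E : Type*} [SeminormedAddCommGroup E] [NormedSpace ℝ E]
    (D : FinDist α) {f : α → E} {C : ℝ} (hf : ∀ a ∈ D.support, ‖f a‖ ≤ C) :
    ‖D.exp f‖ ≤ C :=
  calc ‖D.exp f‖ ≤ ∑ i, ‖D.w i • f (D.pt i)‖ := norm_sum_le _ _
    _ ≤ ∑ i, D.w i * C := by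
      refine sum_le_sum fun i _ => ?_
      rw [norm_smul, Real.norm_of_nonneg (D.w_nonneg i)]
      by_cases hwi : D.w i = 0
      · simp [hwi]
      · exact mul_le_mul_of_nonneg_left (hf _ ⟨i, hwi, rfl⟩) (D.w_nonneg i)
    _ = C := by rw [← sum_mul, D.w_sum, one_mul]

end FinDist

section InnerProductSpace

variable {E : Type*} [NormedAddCommGroup E] [InnerProductSpace ℝ E]

theorem norm_sum_range_sq_le_of_inner_le (w : ℕ → E) (a : ℕ → ℝ) {T : ℕ}
    (h : ∀ t < T, 2 * ⟪∑ τ ∈ range t, w τ, w t⟫ + ‖w t‖ ^ 2 ≤ a t) :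
    ‖∑ t ∈ range T, w t‖ ^ 2 ≤ ∑ t ∈ range T, a t := by
  induction T with
  | zero => simp
  | succ T ih =>
    rw [sum_range_succ, sum_range_succ, norm_add_sq_real]
    have := h T T.lt_succ_self
    linarith [ih fun t ht => h t (ht.trans T.lt_succ_self)]

end InnerProductSpace

section FeatureMap

variable {E : Type*} [NormedAddCommGroup E] [InnerProductSpace ℝ E] {ι : Type*}

noncomputable def featureMap (g : ι → E) (u : E) : EuclideanSpace ℝ ι :=
  (WithLp.equiv 2 (ι → ℝ)).symm fun j => ⟪g j, u⟫

@[simp]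
theorem featureMap_apply (g : ι → E) (u : E) (j : ι) : featureMap g u j = ⟪g j, u⟫ := rfl

theorem norm_featureMap_sq_le [Fintype ι] {g : ι → E} {u : E} {B Dm : ℝ} (hg : ∀ j, ‖g j‖ ≤ B)
    (hu : ‖u‖ ≤ Dm) : ‖featureMap g u‖ ^ 2 ≤ Fintype.card ι * B ^ 2 * Dm ^ 2 := by
  rw [EuclideanSpace.real_norm_sq_eq]
  calc ∑ j, featureMap g u j ^ 2 ≤ ∑ _j : ι, (B * Dm) ^ 2 := by
        refine sum_le_sum fun j _ => ?_
        rw [featureMap_apply, ← sq_abs]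
        refine pow_le_pow_left₀ (abs_nonneg _) ?_ 2
        calc |⟪g j, u⟫| ≤ ‖g j‖ * ‖u‖ := abs_real_inner_le_norm _ _
          _ ≤ B * Dm := mul_le_mul (hg j) hu (norm_nonneg _) ((norm_nonneg _).trans (hg j))
    _ = Fintype.card ι * B ^ 2 * Dm ^ 2 := by simp only [sum_const, card_univ, nsmul_eq_mul]; ring

end FeatureMap

theorem stmt_8_general
    {X : Type*} {d r : ℕ}
    (Z : Set (EuclideanSpace ℝ (Fin d)))
    (Dm : ℝ) (hDiam : ∀ z ∈ Z, ∀ z' ∈ Z, ‖z - z'‖ ≤ Dm)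
    (B : ℝ)
    (g : Fin r → X → EuclideanSpace ℝ (Fin d) → EuclideanSpace ℝ (Fin d))
    (hB : ∀ (j : Fin r) (x : X), ∀ p ∈ Z, ‖g j x p‖ ≤ B)
    (T : ℕ)
    (x : ℕ → X) (y : ℕ → EuclideanSpace ℝ (Fin d)) (hy : ∀ t < T, y t ∈ Z)
    (D : ℕ → FinDist (EuclideanSpace ℝ (Fin d)))
    (hD : ∀ t < T, (D t).support ⊆ Z)
    (ε : ℕ → ℝ)
    (hεle : ∀ t < T, ε t ≤ Dm ^ 2 * (r : ℝ) * B ^ 2 / 2)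
    (hEVI : ∀ t < T, ∀ z' ∈ Z,
      (D t).exp (fun p =>
        (⟪(∑ τ ∈ Finset.range t, (D τ).exp (fun q =>
            (WithLp.equiv 2 (∀ _ : Fin r, ℝ)).symm
              (fun j => (⟪g j (x τ) q, y τ - q⟫ : ℝ)))),
          (WithLp.equiv 2 (∀ _ : Fin r, ℝ)).symm
            (fun j => (⟪g j (x t) p, z' - p⟫ : ℝ))⟫)) ≤ ε t)
    (j : Fin r) :
    |∑ t ∈ Finset.range T, (D t).exp (fun p => (⟪g j (x t) p, y t - p⟫ : ℝ))| ≤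
      Real.sqrt (2 * (r : ℝ) * B ^ 2 * Dm ^ 2 * (T : ℝ)) := by
  set K := (r : ℝ) * B ^ 2 * Dm ^ 2
  let w : ℕ → EuclideanSpace ℝ (Fin r) := fun t =>
    (D t).exp fun p => featureMap (fun i => g i (x t) p) (y t - p)
  have hw_norm : ∀ t < T, ‖w t‖ ^ 2 ≤ K := fun t ht =>
    (Real.le_sqrt (norm_nonneg _) (by positivity)).1 <| (D t).norm_exp_le fun p hp =>
      have hpZ := hD t ht hp
      Real.le_sqrt_of_sq_le <| by
        simpa using norm_featureMap_sq_le (fun i => hB i (x t) p hpZ) (hDiam _ (hy t ht) p hpZ)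
  have hw_inner : ∀ t < T, ⟪∑ τ ∈ range t, w τ, w t⟫ ≤ ε t := fun t ht => by
    have := FinDist.map_exp (innerSL ℝ (∑ τ ∈ range t, w τ)) (D t)
      fun p => featureMap (fun i => g i (x t) p) (y t - p)
    simp only [innerSL_apply_apply] at this
    exact this ▸ hEVI t ht (y t) (hy t ht)
  have hsum_norm : ‖∑ t ∈ range T, w t‖ ^ 2 ≤ T * (2 * K) := by
    simpa using norm_sum_range_sq_le_of_inner_le w (fun _ => 2 * K) fun t ht => by
      linarith [hw_inner t ht, hw_norm t ht, hεle t ht]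
  have hcoord : (∑ t ∈ range T, w t) j =
      ∑ t ∈ range T, (D t).exp (fun p => (⟪g j (x t) p, y t - p⟫ : ℝ)) := by
    rw [WithLp.ofLp_sum, Finset.sum_apply]
    exact sum_congr rfl fun t _ =>
      FinDist.map_exp (PiLp.proj 2 (𝕜 := ℝ) (fun _ : Fin r => ℝ) j) _ _
  rw [← hcoord]
  refine Real.abs_le_sqrt ?_
  calc (∑ t ∈ range T, w t) j ^ 2 ≤ ‖∑ t ∈ range T, w t‖ ^ 2 := by
        rw [← sq_abs, ← Real.norm_eq_abs]
        exact pow_le_pow_left₀ (norm_nonneg _) (PiLp.norm_apply_le _ j) 2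
    _ ≤ 2 * r * B ^ 2 * Dm ^ 2 * T := by linarith

/-- Example 4.8: explicit finite-dimensional feature maps for
first moments.  With `H = ℝ^r`, `Φ(x,p)(u)_j = ⟨g_j(x,p), u⟩`, targets
`z_t = y_t ∈ Z`, and EVI tolerances `ε_t ≤ D²·r·B²/2`, for every `j`:
`|∑_t E_{p∼D_t} ⟨g_j(x_t,p), y_t − p⟩| ≤ sqrt(2·r·B²·D²·T)`. -/
theorem stmt_8
    {X : Type*} [Nonempty X] {d r : ℕ} (hd : 1 ≤ d) (hr : 1 ≤ r)
    (Z : Set (EuclideanSpace ℝ (Fin d))) (hZ : Z.Nonempty)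
    (Dm : ℝ) (hDiam : ∀ z ∈ Z, ∀ z' ∈ Z, ‖z - z'‖ ≤ Dm)
    (B : ℝ)
    (g : Fin r → X → EuclideanSpace ℝ (Fin d) → EuclideanSpace ℝ (Fin d))
    (hB : ∀ (j : Fin r) (x : X), ∀ p ∈ Z, ‖g j x p‖ ≤ B)
    (T : ℕ) (hT : 1 ≤ T)
    (x : ℕ → X) (y : ℕ → EuclideanSpace ℝ (Fin d)) (hy : ∀ t < T, y t ∈ Z)
    (D : ℕ → FinDist (EuclideanSpace ℝ (Fin d)))
    (hD : ∀ t < T, (D t).support ⊆ Z)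
    (ε : ℕ → ℝ) (hε : ∀ t < T, 0 ≤ ε t)
    (hεle : ∀ t < T, ε t ≤ Dm ^ 2 * (r : ℝ) * B ^ 2 / 2)
    (hEVI : ∀ t < T, ∀ z' ∈ Z,
      (D t).exp (fun p =>
        (⟪(∑ τ ∈ Finset.range t, (D τ).exp (fun q =>
            (WithLp.equiv 2 (∀ _ : Fin r, ℝ)).symm
              (fun j => (⟪g j (x τ) q, y τ - q⟫ : ℝ)))),
          (WithLp.equiv 2 (∀ _ : Fin r, ℝ)).symm
            (fun j => (⟪g j (x t) p, z' - p⟫ : ℝ))⟫)) ≤ ε t)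
    (j : Fin r) :
    |∑ t ∈ Finset.range T, (D t).exp (fun p => (⟪g j (x t) p, y t - p⟫ : ℝ))| ≤
      Real.sqrt (2 * (r : ℝ) * B ^ 2 * Dm ^ 2 * (T : ℝ)) :=
  stmt_8_general Z Dm hDiam B g hB T x y hy D hD ε hεle hEVI j
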